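/- Let m ≥ 1 be an integer, let M ≥ 0 be an integer and let c > 0 be real. Then the series Σ_S Tr(S)^M · e^{−c·Tr(S)}, where S ranges over all positive definite half-integral symmetric m×m matrices, converges (the family is summable). -/

import Mathlib

/-!
Halving is a bijection from integer matrices onto matrices with entries in `(1/2)ℤ`, so it
suffices to dominate the family by a summable function of the entries. Testing a positive
semidefinite `S` on `eᵢ ± eⱼ` gives `2|S i j| ≤ S i i + S j j`, hence `∑ᵢⱼ |S i j| ≤ m · Tr S`.
Combined with `x^M e^{-cx} ≤ M! (2/c)^M e^{-cx/2}` this bounds the general term by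
`C ∏ᵢⱼ e^{-ε|S i j|}`, a product of summable functions of the separate entries.
-/

open Real Set

noncomputable section

def HalfIntegralPosDef (m : ℕ) : Set (Matrix (Fin m) (Fin m) ℝ) :=
  {S | S.IsSymm ∧ (∀ i, ∃ z : ℤ, S i i = (z : ℝ)) ∧
    (∀ i j, ∃ z : ℤ, S i j = (z : ℝ) / 2) ∧ S.PosDef}

open Matrix

theorem summable_exp_neg_mul_abs_int {δ : ℝ} (hδ : 0 < δ) :
    Summable fun z : ℤ => exp (-δ * |(z : ℝ)|) := by
  have h : Summable fun n : ℕ => exp (n * -δ) := Real.summable_exp_nat_mul_iff.2 (by linarith)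
  refine summable_int_iff_summable_nat_and_neg.2 ⟨?_, ?_⟩ <;>
    refine h.congr fun n => ?_ <;> simp [mul_comm]

theorem summable_pi_prod_of_nonneg {ι α : Type*} [Fintype ι] {f : α → ℝ} (hf : 0 ≤ f)
    (hs : Summable f) : Summable fun v : ι → α => ∏ i, f (v i) := by
  classical
  refine summable_of_sum_le (c := ∏ _i : ι, ∑' a, f a)
    (fun v => Finset.prod_nonneg fun i _ => hf _) fun u => ?_
  calc ∑ v ∈ u, ∏ i, f (v i)
      ≤ ∑ v ∈ Fintype.piFinset fun i => u.image (· i), ∏ i, f (v i) :=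
        Finset.sum_le_sum_of_subset_of_nonneg
          (fun v hv => Fintype.mem_piFinset.2 fun i => Finset.mem_image_of_mem _ hv)
          (fun v _ _ => Finset.prod_nonneg fun i _ => hf _)
    _ = ∏ i, ∑ a ∈ u.image (· i), f a := (Finset.prod_univ_sum _ _).symm
    _ ≤ ∏ i, ∑' a, f a :=
        Finset.prod_le_prod (fun i _ => Finset.sum_nonneg fun a _ => hf a)
          fun i _ => hs.sum_le_tsum _ fun a _ => hf a

theorem pow_mul_exp_neg_mul_le {c : ℝ} (hc : 0 < c) (M : ℕ) {x : ℝ} (hx : 0 ≤ x) :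
    x ^ M * exp (-c * x) ≤ M.factorial * (2 / c) ^ M * exp (-(c / 2) * x) := by
  have hexp := pow_div_factorial_le_exp (x := c * x / 2) (by positivity) M
  rw [div_le_iff₀ (by positivity)] at hexp
  calc x ^ M * exp (-c * x) = (2 / c) ^ M * (c * x / 2) ^ M * exp (-c * x) := by
        rw [← mul_pow]; field_simp
    _ ≤ (2 / c) ^ M * (exp (c * x / 2) * M.factorial) * exp (-c * x) := by gcongr
    _ = M.factorial * (2 / c) ^ M * exp (-(c / 2) * x) := by
        rw [show -(c / 2) * x = c * x / 2 + -c * x by ring, exp_add]; ring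

namespace Matrix.PosSemidef

variable {n : Type*} [Fintype n] {S : Matrix n n ℝ}

theorem two_mul_abs_apply_le (hS : S.PosSemidef) (i j : n) :
    2 * |S i j| ≤ S i i + S j j := by
  classical
  have hsymm : S j i = S i j := by simpa using hS.1.apply i j
  have quad (x y : n) : Pi.single x 1 ⬝ᵥ (S *ᵥ Pi.single y 1) = S x y := by
    simp [mulVec_single, single_dotProduct]
  have hplus := hS.dotProduct_mulVec_nonneg (Pi.single i 1 + Pi.single j 1)
  have hminus := hS.dotProduct_mulVec_nonneg (Pi.single i 1 - Pi.single j 1)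
  simp only [star_trivial, mulVec_add, mulVec_sub, add_dotProduct, dotProduct_add,
    sub_dotProduct, dotProduct_sub, quad, hsymm] at hplus hminus
  have habs : |S i j| ≤ (S i i + S j j) / 2 := abs_le.2 ⟨by linarith, by linarith⟩
  linarith

theorem sum_abs_apply_le_card_mul_trace (hS : S.PosSemidef) :
    ∑ i, ∑ j, |S i j| ≤ Fintype.card n * S.trace := by
  have key : ∑ i, ∑ j, 2 * |S i j| ≤ ∑ i, ∑ j, (S i i + S j j) :=
    Finset.sum_le_sum fun i _ => Finset.sum_le_sum fun j _ => hS.two_mul_abs_apply_le i j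
  have lhs : ∑ i, ∑ j, 2 * |S i j| = 2 * ∑ i, ∑ j, |S i j| := by simp only [Finset.mul_sum]
  have rhs : ∑ i, ∑ j, (S i i + S j j) = 2 * (Fintype.card n * S.trace) := by
    simp only [Finset.sum_add_distrib, Finset.sum_const, Finset.card_univ, nsmul_eq_mul,
      ← Finset.mul_sum, trace, diag_apply]
    ring
  linarith

theorem trace_pow_mul_exp_neg_le (hS : S.PosSemidef) {c : ℝ} (hc : 0 < c) (M : ℕ) :
    S.trace ^ M * exp (-c * S.trace) ≤
      M.factorial * (2 / c) ^ M *
        ∏ i, ∏ j, exp (-(c / (2 * (Fintype.card n + 1))) * |S i j|) := by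
  have htr := hS.trace_nonneg
  have hdecay : c / (2 * (Fintype.card n + 1)) * ∑ i, ∑ j, |S i j| ≤ c / 2 * S.trace :=
    calc c / (2 * (Fintype.card n + 1)) * ∑ i, ∑ j, |S i j|
        ≤ c / (2 * (Fintype.card n + 1)) * ((Fintype.card n + 1) * S.trace) := by
          gcongr; linarith [hS.sum_abs_apply_le_card_mul_trace]
      _ = c / 2 * S.trace := by field_simp
  calc S.trace ^ M * exp (-c * S.trace)
      ≤ M.factorial * (2 / c) ^ M * exp (-(c / 2) * S.trace) := pow_mul_exp_neg_mul_le hc M htr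
    _ ≤ M.factorial * (2 / c) ^ M *
          exp (-(c / (2 * (Fintype.card n + 1))) * ∑ i, ∑ j, |S i j|) := by
        gcongr _ * ?_
        exact exp_le_exp.2 (by linarith)
    _ = _ := by simp only [Finset.mul_sum, exp_sum]

end Matrix.PosSemidef

theorem HalfIntegralPosDef.exists_injective_intMatrix (m : ℕ) :
    ∃ v : HalfIntegralPosDef m → Matrix (Fin m) (Fin m) ℤ, Function.Injective v ∧
      ∀ (S : HalfIntegralPosDef m) i j, (S : Matrix (Fin m) (Fin m) ℝ) i j = v S i j / 2 := by
  choose v hv using fun S : HalfIntegralPosDef m => S.2.2.2.1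
  exact ⟨v, fun S T h => Subtype.ext <| Matrix.ext fun i j => by rw [hv, hv, h], hv⟩

theorem summable_trace_pow_mul_exp_neg_trace_general (m M : ℕ) (c : ℝ) (hc : 0 < c) :
    Summable (fun S : HalfIntegralPosDef m => (S : Matrix (Fin m) (Fin m) ℝ).trace ^ M *
      Real.exp (-c * (S : Matrix (Fin m) (Fin m) ℝ).trace)) := by
  obtain ⟨v, hv_inj, hv⟩ := HalfIntegralPosDef.exists_injective_intMatrix m
  set ε := c / (2 * (m + 1))
  have hε : 0 < ε := by positivity
  have hhalf : Summable fun z : ℤ => exp (-ε * |(z : ℝ) / 2|) :=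
    (summable_exp_neg_mul_abs_int (half_pos hε)).congr fun z => by rw [abs_div, abs_two]; ring_nf
  have hdom : Summable fun w : Matrix (Fin m) (Fin m) ℤ =>
      M.factorial * (2 / c) ^ M * ∏ i, ∏ j, exp (-ε * |(w i j : ℝ) / 2|) :=
    (summable_pi_prod_of_nonneg (fun _ => by positivity)
      (summable_pi_prod_of_nonneg (fun _ => by positivity) hhalf)).mul_left _
  refine Summable.of_nonneg_of_le (fun S => ?_) (fun S => ?_) (hdom.comp_injective hv_inj)
  · have := S.2.2.2.2.posSemidef.trace_nonneg
    positivity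
  · simpa [hv] using S.2.2.2.2.posSemidef.trace_pow_mul_exp_neg_le hc M

/-- For any `m ≥ 1`, `M ≥ 0` and real `c > 0`, the family
`Tr(S)^M e^{-c Tr(S)}`, indexed by the positive definite half-integral symmetric
`m × m` matrices `S`, is summable. -/
theorem summable_trace_pow_mul_exp_neg_trace (m M : ℕ) (hm : 1 ≤ m) (c : ℝ) (hc : 0 < c) :
    Summable (fun S : HalfIntegralPosDef m => (S : Matrix (Fin m) (Fin m) ℝ).trace ^ M *
      Real.exp (-c * (S : Matrix (Fin m) (Fin m) ℝ).trace)) :=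
  summable_trace_pow_mul_exp_neg_trace_general m M c hc

end
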